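/- arXiv:1507.00845 — 5 statements merged into one kernel-verified Lean document; each statement's English description precedes it below -/
import Mathlib

section
/- For every real α with 0 < α ≤ 1 and every real η > 0, one has E_{α,1}(-η) > 0. -/
/-!
Write `(1 - z) ^ (-r) = ∑ multichoose r n * z ^ n`. For `0 < α < 1` and `l > 0` let `u n` be the
coefficients of `U = (1 - z) ^ (α - 1) / ((1 - z) ^ α + l)`, so that
`(1 - z) ^ α * U = (1 - z) ^ (α - 1) - l * U`. All coefficients of `(1 - z) ^ α` after the constant
one are `≤ 0`, so this convolution equation is a renewal recursion: by strong induction `u m ≥ c`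
for `m ≤ n` as soon as `c * l ≤ s m * (1 - c)` for the (decreasing) coefficients `s m` of
`(1 - z) ^ (α - 1)`. Bernoulli's inequality gives `s n ≥ (1 - α) * n ^ (-α)`, so `l = η / n ^ α`
and `c = (1 - α) / (1 - α + η)` work. Expanding `u n` in powers of `l`, the `k`-th term is
`(-η) ^ k * multichoose (α k + 1) n / n ^ (α k)`, which tends to `(-η) ^ k / Γ(α k + 1)` by Euler's
limit formula and is dominated uniformly in `n`; hence `E_{α,1}(-η) = lim u n ≥ c > 0`.
For `α = 1`, `E_{1,1}(-η) = exp (-η)`.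
-/

/-- The Mittag-Leffler function `E_{α,β}(x) = ∑_{k=0}^∞ x^k / Γ(αk + β)` for real `x`,
where `1/Γ` is interpreted as its entire extension (Mathlib's `Real.Gamma` vanishes at the
poles, so division yields `0` there). The series converges absolutely for every `x`. -/
noncomputable def mittagLeffler (α β x : ℝ) : ℝ :=
  ∑' k : ℕ, x ^ k / Real.Gamma (α * k + β)

open Finset Filter Topology Ring

namespace Ring

theorem multichoose_add {R : Type*} [CommRing R] [BinomialRing R] (r s : R) (n : ℕ) :
    multichoose (r + s) n = ∑ p ∈ antidiagonal n, multichoose r p.1 * multichoose s p.2 := by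
  have hneg : ∀ (t : R) (k : ℕ), multichoose t k = Int.negOnePow k • choose (-t) k := by
    intro t k
    rw [choose_neg', smul_smul, ← Int.negOnePow_add, ← two_mul, Int.negOnePow_two_mul, one_smul]
  rw [hneg, neg_add, add_choose_eq n (Commute.all _ _), smul_sum]
  refine sum_congr rfl fun p hp => ?_
  rw [hneg, hneg, smul_mul_smul_comm, ← Int.negOnePow_add, ← Nat.cast_add,
    (mem_antidiagonal.mp hp)]

theorem multichoose_natCast_add_one {R : Type*} [CommRing R] [BinomialRing R] (k n : ℕ) :
    multichoose ((k : R) + 1) n = (k + n).choose n := by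
  rw [multichoose_eq, add_right_comm, add_sub_cancel_right, ← Nat.cast_add, choose_natCast]

theorem multichoose_succ {K : Type*} [Field K] [CharZero K] (r : K) (n : ℕ) :
    multichoose r (n + 1) = multichoose r n * (r + n) / (n + 1) := by
  have hfac : ∀ m : ℕ, (m.factorial : K) * multichoose r m = (ascPochhammer K m).eval r := by
    intro m
    rw [← nsmul_eq_mul, factorial_nsmul_multichoose_eq_ascPochhammer,
      Polynomial.ascPochhammer_smeval_eq_eval]
  have h := hfac (n + 1)
  rw [ascPochhammer_succ_eval, ← hfac, Nat.factorial_succ, Nat.cast_mul] at h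
  have : (n.factorial : K) ≠ 0 := by exact_mod_cast n.factorial_ne_zero
  rw [eq_div_iff (Nat.cast_add_one_ne_zero n)]
  apply mul_left_cancel₀ this
  push_cast at h
  linear_combination h

theorem prod_range_add_eq_mul_factorial_mul_multichoose {K : Type*} [Field K] [CharZero K]
    (x : K) (n : ℕ) : ∏ j ∈ range (n + 1), (x + j) = x * n.factorial * multichoose (x + 1) n := by
  induction n with
  | zero => simp
  | succ n ih =>
    rw [prod_range_succ, ih, multichoose_succ, Nat.factorial_succ]
    have : (n : K) + 1 ≠ 0 := Nat.cast_add_one_ne_zero n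
    push_cast
    field_simp
    ring

section Ordered

variable {K : Type*} [Field K] [LinearOrder K] [IsStrictOrderedRing K]

theorem multichoose_nonneg {r : K} (hr : 0 ≤ r) (n : ℕ) : 0 ≤ multichoose r n := by
  induction n with
  | zero => simp
  | succ n ih => rw [multichoose_succ]; positivity

theorem multichoose_pos {r : K} (hr : 0 < r) (n : ℕ) : 0 < multichoose r n := by
  induction n with
  | zero => simp
  | succ n ih => rw [multichoose_succ]; positivity

theorem multichoose_le_multichoose {r r' : K} (hr : 0 ≤ r) (hrr' : r ≤ r') (n : ℕ) :
    multichoose r n ≤ multichoose r' n := by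
  induction n with
  | zero => simp
  | succ n ih =>
    rw [multichoose_succ, multichoose_succ]
    have hr_n := multichoose_nonneg hr n
    have hr'_n := multichoose_nonneg (hr.trans hrr') n
    gcongr

theorem multichoose_antitone {r : K} (hr0 : 0 ≤ r) (hr1 : r ≤ 1) :
    Antitone (multichoose r) := by
  refine antitone_nat_of_succ_le fun n => ?_
  rw [multichoose_succ, mul_div_assoc]
  refine mul_le_of_le_one_right (multichoose_nonneg hr0 n) ?_
  rw [div_le_one (by positivity)]
  linarith

theorem multichoose_neg_nonpos {a : K} (ha0 : 0 ≤ a) (ha1 : a ≤ 1) {n : ℕ} (hn : 0 < n) :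
    multichoose (-a) n ≤ 0 := by
  induction n, hn using Nat.le_induction with
  | base => simpa using ha0
  | succ n hn ih =>
    rw [multichoose_succ]
    have : (1 : K) ≤ n := by exact_mod_cast hn
    exact div_nonpos_of_nonpos_of_nonneg (mul_nonpos_of_nonpos_of_nonneg ih (by linarith))
      (by positivity)

end Ordered

end Ring

theorem one_sub_le_multichoose_one_sub_mul_rpow {α : ℝ} (hα0 : 0 ≤ α) (hα1 : α ≤ 1) {n : ℕ}
    (hn : 1 ≤ n) : 1 - α ≤ multichoose (1 - α) n * (n : ℝ) ^ α := by
  induction n, hn using Nat.le_induction with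
  | base => simp
  | succ n hn ih =>
    have hn' : (0 : ℝ) < n := by exact_mod_cast hn
    have hbern : ((n : ℝ) / (n + 1)) ^ α ≤ (1 - α + n) / (n + 1) := by
      have h := rpow_one_add_le_one_add_mul_self (s := -1 / (n + 1))
        (by rw [neg_div, neg_le_neg_iff, div_le_one (by positivity)]; linarith) hα0 hα1
      convert h using 2
      · field_simp; ring
      · field_simp; ring
    have hsplit : (n : ℝ) ^ α = ((n : ℝ) / (n + 1)) ^ α * ((n : ℝ) + 1) ^ α := by
      rw [Real.div_rpow hn'.le (by positivity), div_mul_cancel₀ _ (by positivity)]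
    calc 1 - α ≤ multichoose (1 - α) n * (n : ℝ) ^ α := ih
      _ ≤ multichoose (1 - α) n * ((1 - α + n) / (n + 1) * ((n : ℝ) + 1) ^ α) := by
        rw [hsplit]
        gcongr
        · exact multichoose_nonneg (by linarith) n
      _ = multichoose (1 - α) (n + 1) * ((n + 1 : ℕ) : ℝ) ^ α := by
        rw [multichoose_succ]; push_cast; ring

theorem add_add_one_div_mul_rpow_le {x t : ℝ} (hx : 0 ≤ x) (ht : 0 < t) :
    (x + t + 1) / (t + 1) * t ^ x ≤ (t + 1) ^ x := by
  have hlog : 1 / (t + 1) ≤ Real.log ((t + 1) / t) := by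
    have h := Real.one_sub_inv_le_log_of_pos (x := (t + 1) / t) (by positivity)
    convert h using 1
    field_simp
    ring
  have hexp : (x + t + 1) / (t + 1) ≤ ((t + 1) / t) ^ x :=
    calc (x + t + 1) / (t + 1) = x * (1 / (t + 1)) + 1 := by field_simp; ring
      _ ≤ Real.exp (x * (1 / (t + 1))) := Real.add_one_le_exp _
      _ ≤ Real.exp (Real.log ((t + 1) / t) * x) := by
        rw [Real.exp_le_exp, mul_comm (Real.log _)]
        gcongr
      _ = ((t + 1) / t) ^ x := (Real.rpow_def_of_pos (by positivity) x).symm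
  rw [Real.div_rpow (by positivity) ht.le] at hexp
  have := Real.rpow_pos_of_pos ht x
  calc (x + t + 1) / (t + 1) * t ^ x ≤ (t + 1) ^ x / t ^ x * t ^ x := by gcongr
    _ = (t + 1) ^ x := div_mul_cancel₀ _ this.ne'

theorem multichoose_add_one_div_rpow_le {x : ℝ} (hx : 0 ≤ x) {m n : ℕ} (hm : 1 ≤ m)
    (hmn : m ≤ n) : multichoose (x + 1) n / (n : ℝ) ^ x ≤ multichoose (x + 1) m / (m : ℝ) ^ x := by
  induction n, hmn using Nat.le_induction with
  | base => exact le_rfl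
  | succ n hmn ih =>
    have hn : (0 : ℝ) < n := by exact_mod_cast hm.trans hmn
    refine le_trans ?_ ih
    rw [multichoose_succ, div_le_div_iff₀ (by positivity) (Real.rpow_pos_of_pos hn x)]
    push_cast
    have := multichoose_pos (r := x + 1) (by linarith) n
    calc multichoose (x + 1) n * (x + 1 + n) / (n + 1) * (n : ℝ) ^ x
        = multichoose (x + 1) n * ((x + n + 1) / (n + 1) * (n : ℝ) ^ x) := by ring
      _ ≤ multichoose (x + 1) n * ((n : ℝ) + 1) ^ x := by
        gcongr
        exact add_add_one_div_mul_rpow_le hx hn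

theorem tendsto_multichoose_add_one_div_rpow {x : ℝ} (hx : 0 ≤ x) :
    Tendsto (fun n : ℕ => multichoose (x + 1) n / (n : ℝ) ^ x) atTop
      (𝓝 (Real.Gamma (x + 1))⁻¹) := by
  rcases hx.eq_or_lt with rfl | hx
  · simp
  have hGamma :
      Tendsto (fun n => (x * Real.GammaSeq x n)⁻¹) atTop (𝓝 (Real.Gamma (x + 1))⁻¹) := by
    rw [Real.Gamma_add_one hx.ne']
    exact ((Real.GammaSeq_tendsto_Gamma x).const_mul x).inv₀
      (mul_pos hx (Real.Gamma_pos_of_pos hx)).ne'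
  refine hGamma.congr' ?_
  filter_upwards [eventually_gt_atTop 0] with n hn
  have := multichoose_pos (r := x + 1) (by linarith) n
  have : (0 : ℝ) < (n : ℝ) ^ x := Real.rpow_pos_of_pos (by exact_mod_cast hn) x
  have := n.factorial_pos
  rw [Real.GammaSeq, prod_range_add_eq_mul_factorial_mul_multichoose]
  field_simp

theorem le_of_sum_antidiagonal_mul_eq {g s u : ℕ → ℝ} {l c : ℝ} {n : ℕ} (hl : -1 < l)
    (hg0 : g 0 = 1) (hg : ∀ i, 0 < i → g i ≤ 0)
    (hs : ∀ m ≤ n, ∑ p ∈ antidiagonal m, g p.1 = s m)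
    (hu : ∀ m ≤ n, ∑ p ∈ antidiagonal m, g p.1 * u p.2 = s m - l * u m)
    (hc : ∀ m ≤ n, c * l ≤ s m * (1 - c)) :
    ∀ m ≤ n, c ≤ u m := by
  intro m
  induction m using Nat.strong_induction_on with
  | _ m ih =>
    intro hmn
    have hzero : ((0, m) : ℕ × ℕ) ∈ antidiagonal m := by simp
    have hle : ∑ p ∈ antidiagonal m, g p.1 * (u p.2 - c) ≤ u m - c := by
      rw [← add_sum_erase _ _ hzero, hg0, one_mul, add_le_iff_nonpos_right]
      refine sum_nonpos fun p hp => ?_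
      obtain ⟨hp0, hp⟩ := mem_erase.mp hp
      have hsum : p.1 + p.2 = m := mem_antidiagonal.mp hp
      have hp1 : 0 < p.1 := Nat.pos_of_ne_zero fun h => hp0 (Prod.ext h (by dsimp only; omega))
      exact mul_nonpos_of_nonpos_of_nonneg (hg _ hp1) (sub_nonneg.mpr (ih _ (by omega) (by omega)))
    simp only [mul_sub, sum_sub_distrib, ← sum_mul, hu m hmn, hs m hmn] at hle
    have : c * (1 + l) ≤ u m * (1 + l) := by linarith [hc m hmn]
    exact le_of_mul_le_mul_right this (by linarith)

theorem multichoose_mul_add_one_le_choose {α : ℝ} (hα0 : 0 ≤ α) (hα1 : α ≤ 1) (k n : ℕ) :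
    multichoose (α * k + 1) n ≤ (k + n).choose n := by
  rw [← multichoose_natCast_add_one]
  refine multichoose_le_multichoose (by positivity) ?_ n
  gcongr
  exact mul_le_of_le_one_left k.cast_nonneg hα1

/-- The `n`-th Taylor coefficient of `(1 - z) ^ (α - 1) / ((1 - z) ^ α + l)`, expanded in powers
of `l`; for `l = η / n ^ α` it is the Grünwald–Letnikov approximation of `E_{α,1}(-η)`. -/
noncomputable def discreteMittagLeffler (α l : ℝ) (n : ℕ) : ℝ :=
  ∑' k : ℕ, (-l) ^ k * multichoose (α * k + 1) n

theorem summable_discreteMittagLeffler {α l : ℝ} (hα0 : 0 ≤ α) (hα1 : α ≤ 1) (hl : |l| < 1)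
    (n : ℕ) : Summable fun k : ℕ => (-l) ^ k * multichoose (α * k + 1) n := by
  refine (summable_choose_mul_geometric_of_norm_lt_one n (r := |l|) (by simpa)).of_norm_bounded
    fun k => ?_
  rw [norm_mul, norm_pow, norm_neg, Real.norm_eq_abs,
    Real.norm_of_nonneg (multichoose_nonneg (by positivity) n), mul_comm]
  gcongr
  exact multichoose_mul_add_one_le_choose hα0 hα1 k n

theorem sum_antidiagonal_multichoose_neg_mul_discreteMittagLeffler {α l : ℝ} (hα0 : 0 ≤ α)
    (hα1 : α ≤ 1) (hl : |l| < 1) (n : ℕ) :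
    ∑ p ∈ antidiagonal n, multichoose (-α) p.1 * discreteMittagLeffler α l p.2
      = multichoose (1 - α) n - l * discreteMittagLeffler α l n := by
  have hf : ∀ k : ℕ, (-l) ^ k * multichoose (-α + (α * k + 1)) n = ∑ p ∈ antidiagonal n,
      multichoose (-α) p.1 * ((-l) ^ k * multichoose (α * k + 1) p.2) := by
    intro k
    rw [multichoose_add, mul_sum]
    exact sum_congr rfl fun p _ => by ring
  have hsum : Summable fun k : ℕ => (-l) ^ k * multichoose (-α + (α * k + 1)) n := by
    simp_rw [hf]
    exact summable_sum fun p _ => (summable_discreteMittagLeffler hα0 hα1 hl p.2).mul_left _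
  have hshift : ∀ k : ℕ, (-l) ^ (k + 1) * multichoose (-α + (α * ↑(k + 1) + 1)) n
      = -l * ((-l) ^ k * multichoose (α * k + 1) n) := by
    intro k
    rw [Nat.cast_succ, show -α + (α * (k + 1) + 1) = α * k + 1 by ring, pow_succ]
    ring
  calc ∑ p ∈ antidiagonal n, multichoose (-α) p.1 * discreteMittagLeffler α l p.2
      = ∑' k : ℕ, (-l) ^ k * multichoose (-α + (α * k + 1)) n := by
        simp_rw [hf, discreteMittagLeffler, ← tsum_mul_left]
        exact (Summable.tsum_finsetSum fun p _ =>
          (summable_discreteMittagLeffler hα0 hα1 hl p.2).mul_left _).symm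
    _ = multichoose (1 - α) n - l * discreteMittagLeffler α l n := by
        rw [hsum.tsum_eq_zero_add, tsum_congr hshift, tsum_mul_left, discreteMittagLeffler]
        norm_num [neg_add_eq_sub]
        ring

theorem div_le_discreteMittagLeffler {α η : ℝ} (hα0 : 0 ≤ α) (hα1 : α < 1) (hη : 0 ≤ η) {n : ℕ}
    (hn : 1 ≤ n) (hηn : η < (n : ℝ) ^ α) :
    (1 - α) / (1 - α + η) ≤ discreteMittagLeffler α (η / (n : ℝ) ^ α) n := by
  have hnα : 0 < (n : ℝ) ^ α := Real.rpow_pos_of_pos (by exact_mod_cast hn) α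
  have hl0 : 0 ≤ η / (n : ℝ) ^ α := by positivity
  have hl1 : |η / (n : ℝ) ^ α| < 1 := by rwa [abs_of_nonneg hl0, div_lt_one hnα]
  have hαη : 0 < 1 - α + η := by linarith
  have hsn : (1 - α) / (n : ℝ) ^ α ≤ multichoose (1 - α) n := by
    rw [div_le_iff₀ hnα]
    exact one_sub_le_multichoose_one_sub_mul_rpow hα0 hα1.le hn
  refine le_of_sum_antidiagonal_mul_eq (by linarith) (multichoose_zero_right _)
    (fun i hi => multichoose_neg_nonpos hα0 hα1.le hi) (fun m _ => ?_)
    (fun m _ => sum_antidiagonal_multichoose_neg_mul_discreteMittagLeffler hα0 hα1.le hl1 m)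
    (fun m hm => ?_) n le_rfl
  · simpa [neg_add_eq_sub] using (multichoose_add (-α) 1 m).symm
  · calc (1 - α) / (1 - α + η) * (η / (n : ℝ) ^ α)
        = (1 - α) / (n : ℝ) ^ α * (1 - (1 - α) / (1 - α + η)) := by
          field_simp
          ring
      _ ≤ multichoose (1 - α) m * (1 - (1 - α) / (1 - α + η)) := by
          have : (1 - α) / (1 - α + η) ≤ 1 := by
            rw [div_le_one hαη]
            linarith
          gcongr
          exact hsn.trans (multichoose_antitone (by linarith) (by linarith) hm)

theorem tendsto_discreteMittagLeffler {α : ℝ} (hα0 : 0 < α) (hα1 : α ≤ 1) (η : ℝ) :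
    Tendsto (fun n : ℕ => discreteMittagLeffler α (η / (n : ℝ) ^ α) n) atTop
      (𝓝 (mittagLeffler α 1 (-η))) := by
  have hterm : ∀ (n k : ℕ), (-(η / (n : ℝ) ^ α)) ^ k * multichoose (α * k + 1) n
      = (-η) ^ k * (multichoose (α * k + 1) n / (n : ℝ) ^ (α * k)) := by
    intro n k
    rw [Real.rpow_mul_natCast n.cast_nonneg, ← neg_div, div_pow]
    ring
  obtain ⟨N, hN1, hNη⟩ := ((eventually_ge_atTop 1).and
    (((tendsto_rpow_atTop hα0).comp tendsto_natCast_atTop_atTop).eventually_gt_atTop |η|)).exists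
  have hNα : 0 < (N : ℝ) ^ α := Real.rpow_pos_of_pos (by exact_mod_cast hN1) α
  have hbound : Summable fun k : ℕ => ((k + N).choose N : ℝ) * (|η| / (N : ℝ) ^ α) ^ k :=
    summable_choose_mul_geometric_of_norm_lt_one N (by
      rwa [Real.norm_of_nonneg (by positivity), div_lt_one hNα])
  simp_rw [discreteMittagLeffler, hterm, mittagLeffler, div_eq_mul_inv]
  refine tendsto_tsum_of_dominated_convergence hbound
    (fun k => (tendsto_multichoose_add_one_div_rpow (by positivity)).const_mul _) ?_
  filter_upwards [eventually_ge_atTop N] with n hn k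
  have hM := multichoose_nonneg (r := α * k + 1) (by positivity) n
  rw [norm_mul, norm_pow, norm_neg, Real.norm_eq_abs, Real.norm_of_nonneg (by positivity),
    div_pow, ← Real.rpow_mul_natCast (N.cast_nonneg), mul_div_left_comm]
  gcongr
  calc multichoose (α * k + 1) n / (n : ℝ) ^ (α * k)
      ≤ multichoose (α * k + 1) N / (N : ℝ) ^ (α * k) :=
        multichoose_add_one_div_rpow_le (by positivity) hN1 hn
    _ ≤ (k + N).choose N / (N : ℝ) ^ (α * k) := by
        gcongr
        exact multichoose_mul_add_one_le_choose hα0.le hα1 k N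

theorem mittagLeffler_one (x : ℝ) : mittagLeffler 1 1 x = Real.exp x := by
  simp_rw [mittagLeffler, one_mul, Real.Gamma_nat_eq_factorial, Real.exp_eq_exp_ℝ,
    NormedSpace.exp_eq_tsum_div]

/-- For every `0 < α ≤ 1` and every `η > 0`, one has `E_{α,1}(-η) > 0`. -/
theorem mittagLeffler_pos (α : ℝ) (hα0 : 0 < α) (hα1 : α ≤ 1) (η : ℝ) (hη : 0 < η) :
    0 < mittagLeffler α 1 (-η) := by
  rcases hα1.lt_or_eq with hα1 | rfl
  · have hlower : ∀ᶠ n : ℕ in atTop,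
        (1 - α) / (1 - α + η) ≤ discreteMittagLeffler α (η / (n : ℝ) ^ α) n := by
      filter_upwards [eventually_ge_atTop 1,
        ((tendsto_rpow_atTop hα0).comp tendsto_natCast_atTop_atTop).eventually_gt_atTop η]
        with n hn hηn
      exact div_le_discreteMittagLeffler hα0.le hα1 hη.le hn hηn
    have hpos : 0 < (1 - α) / (1 - α + η) := div_pos (by linarith) (by linarith)
    exact hpos.trans_le (ge_of_tendsto (tendsto_discreteMittagLeffler hα0 hα1.le η) hlower)
  · rw [mittagLeffler_one]
    exact Real.exp_pos _
end

section
/- For every real α > 0, every real λ > 0, and every real t > 0, the function s ↦ E_{α,1}(-λ s^α) is differentiable at t with derivative −λ t^{α−1} E_{α,α}(-λ t^α). -/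
/-!
Since `Γ(x) ≥ b^(x-2) / e^b` for every `b ≥ 1` and `x ≥ 2`, the terms `x^k / Γ(αk + β)` are
eventually dominated by a geometric series, so the Mittag-Leffler series converges for all `x`
and may be differentiated term by term on every ball. The functional equation
`Γ(α(k+1) + 1) = α(k+1) Γ(αk + α)` turns the differentiated series of `E_{α,1}` into
`E_{α,α} / α`, and the chain rule through `s ↦ -λ s^α` gives the theorem.
-/

open Real Filter Nat

theorem Real.rpow_sub_two_div_exp_le_Gamma {b x : ℝ} (hb : 1 ≤ b) (hx : 2 ≤ x) :
    b ^ (x - 2) / exp b ≤ Gamma x := by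
  have hfloor : 2 ≤ ⌊x⌋₊ := Nat.le_floor (by exact_mod_cast hx)
  obtain ⟨m, hm⟩ : ∃ m : ℕ, ⌊x⌋₊ = m + 1 := ⟨⌊x⌋₊ - 1, by omega⟩
  have hm_le : (m : ℝ) + 1 ≤ x := by exact_mod_cast hm ▸ Nat.floor_le (by linarith)
  have hx_lt : x - 2 < m := by
    have := Nat.lt_floor_add_one x
    rw [hm] at this
    push_cast at this
    linarith
  have hm_two : (2 : ℝ) ≤ m + 1 := by exact_mod_cast (by omega : 2 ≤ m + 1)
  calc b ^ (x - 2) / exp b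
      ≤ b ^ m / exp b := by
        gcongr
        exact_mod_cast rpow_le_rpow_of_exponent_le hb hx_lt.le
    _ ≤ m ! := by
        rw [div_le_iff₀ (exp_pos b), ← div_le_iff₀' (by positivity)]
        exact pow_div_factorial_le_exp b (by linarith) m
    _ = Gamma (m + 1) := (Gamma_nat_eq_factorial m).symm
    _ ≤ Gamma x := Gamma_strictMonoOn_Ici.monotoneOn hm_two hx hm_le

theorem summable_pow_div_Gamma {α : ℝ} (hα : 0 < α) (β x : ℝ) :
    Summable fun k : ℕ => x ^ k / Gamma (α * k + β) := by
  set b := max 1 ((|x| + 1) ^ α⁻¹)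
  have hb : 1 ≤ b := le_max_left _ _
  have hb₀ : 0 < b := one_pos.trans_le hb
  have hbα : |x| < b ^ α := calc
    |x| < |x| + 1 := lt_add_one _
    _ = ((|x| + 1) ^ α⁻¹) ^ α := by
      rw [← rpow_mul (by positivity), inv_mul_cancel₀ hα.ne', rpow_one]
    _ ≤ b ^ α := by gcongr; exact le_max_right _ _
  set q := |x| / b ^ α
  have hq : q < 1 := (div_lt_one (by positivity)).mpr hbα
  have hgeom := (summable_geometric_of_lt_one (by positivity) hq).mul_left (exp b * b ^ (2 - β))
  refine hgeom.of_norm_bounded_eventually ?_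
  have hlarge : ∀ᶠ k : ℕ in atTop, 2 ≤ α * k + β :=
    ((tendsto_natCast_atTop_atTop.const_mul_atTop hα).atTop_add
      tendsto_const_nhds).eventually_ge_atTop 2
  rw [Nat.cofinite_eq_atTop]
  filter_upwards [hlarge] with k hk
  have hΓ := rpow_sub_two_div_exp_le_Gamma hb hk
  rw [norm_div, norm_pow, Real.norm_eq_abs, Real.norm_eq_abs,
    abs_of_pos ((by positivity : 0 < b ^ (α * k + β - 2) / exp b).trans_le hΓ)]
  calc |x| ^ k / Gamma (α * k + β)
      ≤ |x| ^ k / (b ^ (α * k + β - 2) / exp b) := by gcongr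
    _ = exp b * b ^ (2 - β) * q ^ k := by
      rw [div_pow, ← rpow_natCast (b ^ α), ← rpow_mul hb₀.le,
        show α * k + β - 2 = α * k - (2 - β) by ring, rpow_sub hb₀]
      field_simp

theorem Real.Gamma_mul_succ_add_one {α : ℝ} (hα : α ≠ 0) (k : ℕ) :
    Gamma (α * (k + 1 : ℕ) + 1) = α * (k + 1) * Gamma (α * k + α) := by
  rw [Nat.cast_succ, Gamma_add_one (mul_ne_zero hα k.cast_add_one_ne_zero), mul_add_one α (k : ℝ)]

theorem hasSum_mittagLeffler_one_deriv {α : ℝ} (hα : 0 < α) (x : ℝ) :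
    HasSum (fun k : ℕ => k * x ^ (k - 1) / Gamma (α * k + 1)) (mittagLeffler α α x / α) := by
  rw [← hasSum_nat_add_iff' 1, Finset.sum_range_one, Nat.cast_zero, zero_mul, zero_div, sub_zero]
  have hterm (k : ℕ) : ((k + 1 : ℕ) : ℝ) * x ^ (k + 1 - 1) / Gamma (α * (k + 1 : ℕ) + 1) =
      x ^ k / Gamma (α * k + α) / α := by
    rw [Gamma_mul_succ_add_one hα.ne', Nat.add_sub_cancel, Nat.cast_succ]
    field_simp
  simp only [hterm]
  exact (summable_pow_div_Gamma hα α x).hasSum.div_const α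

theorem hasDerivAt_mittagLeffler_one {α : ℝ} (hα : 0 < α) (x : ℝ) :
    HasDerivAt (mittagLeffler α 1) (mittagLeffler α α x / α) x := by
  set R := |x| + 1
  have hx : x ∈ Metric.ball (0 : ℝ) R := by simp [R]
  have hbound (k : ℕ) (y : ℝ) (hy : y ∈ Metric.ball (0 : ℝ) R) :
      ‖k * y ^ (k - 1) / Gamma (α * k + 1)‖ ≤ k * R ^ (k - 1) / Gamma (α * k + 1) := by
    rw [mem_ball_zero_iff] at hy
    have hΓ : 0 < Gamma (α * k + 1) := Gamma_pos_of_pos (by positivity)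
    rw [norm_div, norm_mul, norm_pow, Real.norm_of_nonneg hΓ.le, RCLike.norm_natCast]
    gcongr
  rw [← (hasSum_mittagLeffler_one_deriv hα x).tsum_eq]
  exact hasDerivAt_tsum_of_isPreconnected (hasSum_mittagLeffler_one_deriv hα R).summable
    Metric.isOpen_ball (convex_ball 0 R).isPreconnected
    (fun k y _ => (hasDerivAt_pow k y).div_const _) hbound hx (summable_pow_div_Gamma hα 1 x) hx

theorem mittagLeffler_hasDerivAt_general (α : ℝ) (hα : 0 < α) (lam : ℝ)
    (t : ℝ) (ht : 0 < t) :
    HasDerivAt (fun s : ℝ => mittagLeffler α 1 (-lam * s ^ α))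
      (-lam * t ^ (α - 1) * mittagLeffler α α (-lam * t ^ α)) t := by
  have hinner : HasDerivAt (fun s : ℝ => -lam * s ^ α) (-lam * (α * t ^ (α - 1))) t :=
    (hasDerivAt_rpow_const (Or.inl ht.ne')).const_mul (-lam)
  refine ((hasDerivAt_mittagLeffler_one hα _).comp t hinner).congr_deriv ?_
  field_simp

/-- For `α > 0`, `λ > 0` and `t > 0`, the function `s ↦ E_{α,1}(-λ s^α)` is differentiable
at `t` with derivative `-λ t^{α-1} E_{α,α}(-λ t^α)`. -/
theorem mittagLeffler_hasDerivAt (α : ℝ) (hα : 0 < α) (lam : ℝ) (hlam : 0 < lam)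
    (t : ℝ) (ht : 0 < t) :
    HasDerivAt (fun s : ℝ => mittagLeffler α 1 (-lam * s ^ α))
      (-lam * t ^ (α - 1) * mittagLeffler α α (-lam * t ^ α)) t :=
  mittagLeffler_hasDerivAt_general α hα lam t ht
end

section
/- Let 0 < α < 1, λ > 0, and let z be a real number with z > λ^{1/α}. Then the improper integral ∫_0^∞ e^{−zt} E_{α,1}(−λ t^α) dt converges and equals z^{α−1}/(z^α + λ); i.e., the Laplace transform of t ↦ E_{α,1}(−λ t^α) at z is z^{α−1}/(z^α+λ). -/
/-!
Expanding `E_{α,β}` termwise, `e^{-zt} t^{β-1} E_{α,β}(c t^α)` is the sum of the Gamma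
integrands `c^k t^{αk+β-1} e^{-zt} / Γ(αk+β)`, whose integrals over `(0, ∞)` are `c^k z^{-(αk+β)}`.
For `|c| < z^α` the integrals of their absolute values (the same terms with `|c|`) form a
convergent geometric series, so summation and integration may be exchanged, and the geometric
series `∑ c^k z^{-(αk+β)}` sums to `z^{α-β} / (z^α - c)`. The theorem is the case `β = 1`,
`c = -λ`.
-/

open MeasureTheory

open Filter Real Set

namespace MeasureTheory

variable {X E : Type*} [MeasurableSpace X] {μ : Measure X} [NormedAddCommGroup E]
  [CompleteSpace E]

theorem integrable_tsum_of_summable_integral_norm {F : ℕ → X → E}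
    (hF_int : ∀ i, Integrable (F i) μ) (hF_sum : Summable fun i ↦ ∫ a, ‖F i a‖ ∂μ) :
    Integrable (fun a ↦ ∑' i, F i a) μ := by
  have hmeas i : AEMeasurable (‖F i ·‖ₑ) μ := (hF_int i).1.enorm
  have hlint : ∫⁻ a, ∑' i, ‖F i a‖ₑ ∂μ ≠ ⊤ := by
    simp_rw [lintegral_tsum hmeas, ← ofReal_integral_norm_eq_lintegral_enorm (hF_int _),
      ← ENNReal.ofReal_tsum_of_nonneg (fun i ↦ integral_nonneg fun a ↦ norm_nonneg (F i a))
        hF_sum]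
    exact ENNReal.ofReal_ne_top
  have hsum : ∀ᵐ a ∂μ, Summable (‖F · a‖) :=
    (ae_lt_top' (AEMeasurable.tsum hmeas) hlint).mono
      fun a ha ↦ tsum_enorm_ne_top_iff_summable_norm.1 ha.ne
  refine ⟨aestronglyMeasurable_of_tendsto_ae (atTop : Filter ℕ)
    (fun n ↦ Finset.aestronglyMeasurable_fun_sum (Finset.range n) fun i _ ↦ (hF_int i).1) ?_, ?_⟩
  · filter_upwards [hsum] with a ha using ha.of_norm.hasSum.tendsto_sum_nat
  · exact (lintegral_mono fun a ↦ enorm_tsum_le_tsum_enorm).trans_lt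
      (lt_top_iff_ne_top.2 hlint)

end MeasureTheory

section

variable {α β c z : ℝ}

theorem hasSum_pow_mul_one_div_rpow (hz : 0 < z) (hc : |c| < z ^ α) :
    HasSum (fun k : ℕ ↦ c ^ k * (1 / z) ^ (α * k + β)) (z ^ (α - β) / (z ^ α - c)) := by
  have hzα : 0 < z ^ α := rpow_pos_of_pos hz α
  have hterm (k : ℕ) : c ^ k * (1 / z) ^ (α * k + β) = (1 / z) ^ β * (c / z ^ α) ^ k := by
    rw [rpow_add (by positivity), rpow_mul (by positivity), rpow_natCast, one_div,
      inv_rpow hz.le, inv_rpow hz.le]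
    ring
  have hratio : |c / z ^ α| < 1 := by rwa [abs_div, abs_of_pos hzα, div_lt_one hzα]
  have hsum : z ^ (α - β) / (z ^ α - c) = (1 / z) ^ β * (1 - c / z ^ α)⁻¹ := by
    rw [rpow_sub hz, one_div, inv_rpow hz.le]
    field_simp
  simpa only [hterm, hsum] using (hasSum_geometric_of_abs_lt_one hratio).mul_left ((1 / z) ^ β)

noncomputable def laplaceMittagLefflerTerm (α β c z : ℝ) (k : ℕ) (t : ℝ) : ℝ :=
  c ^ k / Gamma (α * k + β) * (t ^ (α * k + β - 1) * exp (-(z * t)))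

theorem exp_neg_mul_mul_rpow_mul_mittagLeffler_eq_tsum {t : ℝ} (ht : 0 < t) :
    exp (-(z * t)) * (t ^ (β - 1) * mittagLeffler α β (c * t ^ α))
      = ∑' k, laplaceMittagLefflerTerm α β c z k t := by
  rw [mittagLeffler, ← tsum_mul_left, ← tsum_mul_left]
  refine tsum_congr fun k ↦ ?_
  rw [laplaceMittagLefflerTerm, mul_pow, ← rpow_natCast (t ^ α), ← rpow_mul ht.le,
    add_sub_assoc, rpow_add ht]
  ring

variable (hα : 0 ≤ α) (hβ : 0 < β)
include hα hβ

theorem integrableOn_laplaceMittagLefflerTerm (hz : 0 < z) (k : ℕ) :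
    IntegrableOn (laplaceMittagLefflerTerm α β c z k) (Ioi 0) := by
  have hs : -1 < α * k + β - 1 := by linarith [mul_nonneg hα k.cast_nonneg]
  have h := integrableOn_rpow_mul_exp_neg_mul_rpow hs one_pos hz
  simp only [rpow_one, neg_mul] at h
  exact h.const_mul _

theorem integral_laplaceMittagLefflerTerm (hz : 0 < z) (k : ℕ) :
    ∫ t in Ioi 0, laplaceMittagLefflerTerm α β c z k t = c ^ k * (1 / z) ^ (α * k + β) := by
  have hpos : 0 < α * k + β := by positivity
  simp only [laplaceMittagLefflerTerm]
  rw [integral_const_mul, integral_rpow_mul_exp_neg_mul_Ioi hpos hz]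
  field_simp [(Gamma_pos_of_pos hpos).ne']

theorem norm_laplaceMittagLefflerTerm (k : ℕ) {t : ℝ} (ht : 0 < t) :
    ‖laplaceMittagLefflerTerm α β c z k t‖ = laplaceMittagLefflerTerm α β |c| z k t := by
  have hΓ : 0 < Gamma (α * k + β) := Gamma_pos_of_pos (by positivity)
  simp only [laplaceMittagLefflerTerm, norm_mul, norm_div, norm_pow, Real.norm_eq_abs,
    abs_of_pos hΓ, abs_of_pos (rpow_pos_of_pos ht _), abs_of_pos (exp_pos _)]

theorem summable_integral_norm_laplaceMittagLefflerTerm (hz : 0 < z) (hc : |c| < z ^ α) :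
    Summable fun k ↦ ∫ t in Ioi 0, ‖laplaceMittagLefflerTerm α β c z k t‖ := by
  have h (k : ℕ) : ∫ t in Ioi 0, ‖laplaceMittagLefflerTerm α β c z k t‖
      = |c| ^ k * (1 / z) ^ (α * k + β) := by
    rw [setIntegral_congr_fun measurableSet_Ioi
      fun t ht ↦ norm_laplaceMittagLefflerTerm hα hβ k ht,
      integral_laplaceMittagLefflerTerm hα hβ hz]
  simpa only [h] using (hasSum_pow_mul_one_div_rpow (β := β) hz (by rwa [abs_abs])).summable

theorem integrableOn_exp_neg_mul_mul_rpow_mul_mittagLeffler (hz : 0 < z) (hc : |c| < z ^ α) :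
    IntegrableOn (fun t ↦ exp (-(z * t)) * (t ^ (β - 1) * mittagLeffler α β (c * t ^ α)))
      (Ioi 0) := by
  refine (integrable_tsum_of_summable_integral_norm
    (integrableOn_laplaceMittagLefflerTerm hα hβ hz)
    (summable_integral_norm_laplaceMittagLefflerTerm hα hβ hz hc)).congr ?_
  filter_upwards [ae_restrict_mem measurableSet_Ioi] with t ht
  exact (exp_neg_mul_mul_rpow_mul_mittagLeffler_eq_tsum ht).symm

theorem integral_exp_neg_mul_mul_rpow_mul_mittagLeffler (hz : 0 < z) (hc : |c| < z ^ α) :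
    ∫ t in Ioi 0, exp (-(z * t)) * (t ^ (β - 1) * mittagLeffler α β (c * t ^ α))
      = z ^ (α - β) / (z ^ α - c) := by
  rw [setIntegral_congr_fun measurableSet_Ioi
    fun t ht ↦ exp_neg_mul_mul_rpow_mul_mittagLeffler_eq_tsum ht]
  refine (hasSum_integral_of_summable_integral_norm
    (integrableOn_laplaceMittagLefflerTerm hα hβ hz)
    (summable_integral_norm_laplaceMittagLefflerTerm hα hβ hz hc)).unique ?_
  simpa only [integral_laplaceMittagLefflerTerm hα hβ hz] using hasSum_pow_mul_one_div_rpow hz hc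

end

theorem mittagLeffler_laplace_transform_general (α : ℝ) (hα0 : 0 < α)
    (lam : ℝ) (hlam : 0 < lam) (z : ℝ) (hz : lam ^ (1 / α) < z) :
    IntegrableOn (fun t : ℝ => Real.exp (-(z * t)) * mittagLeffler α 1 (-lam * t ^ α))
        (Set.Ioi 0) ∧
      ∫ t in Set.Ioi (0 : ℝ), Real.exp (-(z * t)) * mittagLeffler α 1 (-lam * t ^ α)
        = z ^ (α - 1) / (z ^ α + lam) := by
  have hz0 : 0 < z := (rpow_pos_of_pos hlam _).trans hz
  have hc : |-lam| < z ^ α :=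
    calc |-lam| = (lam ^ (1 / α)) ^ α := by
          rw [abs_neg, abs_of_pos hlam, ← rpow_mul hlam.le, one_div_mul_cancel hα0.ne', rpow_one]
      _ < z ^ α := rpow_lt_rpow (rpow_nonneg hlam.le _) hz hα0
  have hint := integrableOn_exp_neg_mul_mul_rpow_mul_mittagLeffler hα0.le one_pos hz0 hc
  have hval := integral_exp_neg_mul_mul_rpow_mul_mittagLeffler hα0.le one_pos hz0 hc
  simp only [sub_self, rpow_zero, one_mul, sub_neg_eq_add] at hint hval
  exact ⟨hint, hval⟩

/-- For `0 < α < 1`, `λ > 0` and real `z > λ^{1/α}`, the Laplace transform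
`∫_0^∞ e^{-zt} E_{α,1}(-λ t^α) dt` converges and equals `z^{α-1}/(z^α + λ)`. -/
theorem mittagLeffler_laplace_transform (α : ℝ) (hα0 : 0 < α) (hα1 : α < 1)
    (lam : ℝ) (hlam : 0 < lam) (z : ℝ) (hz : lam ^ (1 / α) < z) :
    IntegrableOn (fun t : ℝ => Real.exp (-(z * t)) * mittagLeffler α 1 (-lam * t ^ α))
        (Set.Ioi 0) ∧
      ∫ t in Set.Ioi (0 : ℝ), Real.exp (-(z * t)) * mittagLeffler α 1 (-lam * t ^ α)
        = z ^ (α - 1) / (z ^ α + lam) :=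
  mittagLeffler_laplace_transform_general α hα0 lam hlam z hz
end

section
/- Let 0 < α < 1, let ℓ be a natural number, let (λ_n)_{n≥1} be positive reals, and let (ψ_n)_{n≥1} be reals such that ∑_{n=1}^∞ λ_n^k |ψ_n| < ∞ for every k = 0, 1, …, ℓ, and suppose the moments ∑_{n=1}^∞ λ_n^k ψ_n = 0 vanish for every k = 0, 1, …, ℓ−1. Then for every real t ≥ 0 one has ∑_{n=1}^∞ E_{α,1}(−λ_n t^α) ψ_n = ∑_{n=1}^∞ (−λ_n t^α)^ℓ E_{α,1+ℓα}(−λ_n t^α) ψ_n. -/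
/-- Log-convexity of `Γ` gives `Γ(z+α) ≥ (z-1)^α Γ(z)` for `z ≥ 2`. -/
lemma gamma_ratio_aux {α z : ℝ} (hα : 0 < α) (hz : 2 ≤ z) :
    (z - 1) ^ α * Real.Gamma z ≤ Real.Gamma (z + α) := by
  have h1 : (0:ℝ) < z - 1 := by linarith
  have hz0 : (0:ℝ) < z := by linarith
  have hG1 : 0 < Real.Gamma (z - 1) := Real.Gamma_pos_of_pos h1
  have hGz : 0 < Real.Gamma z := Real.Gamma_pos_of_pos hz0
  have hGza : 0 < Real.Gamma (z + α) := Real.Gamma_pos_of_pos (by linarith)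
  have hslope := Real.convexOn_log_Gamma.slope_mono_adjacent
      (x := z - 1) (y := z) (z := z + α) (Set.mem_Ioi.2 h1)
      (Set.mem_Ioi.2 (by linarith)) (by linarith) (by linarith)
  simp only [Function.comp_apply] at hslope
  have hGrec : Real.Gamma z = (z - 1) * Real.Gamma (z - 1) := by
    have := Real.Gamma_add_one h1.ne'
    rwa [sub_add_cancel] at this
  have hlog : Real.log (Real.Gamma z) - Real.log (Real.Gamma (z - 1)) = Real.log (z - 1) := by
    rw [hGrec, Real.log_mul h1.ne' hG1.ne']
    ring
  have hden1 : z - (z - 1) = 1 := by ring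
  have hden2 : z + α - z = α := by ring
  rw [hden1, hden2, div_one, hlog] at hslope
  have key : α * Real.log (z - 1) + Real.log (Real.Gamma z) ≤ Real.log (Real.Gamma (z + α)) := by
    have := (le_div_iff₀ hα).mp hslope
    linarith [this]
  have := Real.exp_le_exp.2 key
  rw [Real.exp_add, Real.exp_log hGz, Real.exp_log hGza] at this
  rwa [Real.rpow_def_of_pos h1, mul_comm (Real.log (z - 1)) α]

/-- The Mittag-Leffler series is summable for every real argument (here `β ≥ 1`). -/
lemma summable_mittagLeffler (α β x : ℝ) (hα0 : 0 < α) (hβ : 1 ≤ β) :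
    Summable (fun k : ℕ => x ^ k / Real.Gamma (α * k + β)) := by
  apply summable_of_ratio_norm_eventually_le (r := 1/2) (by norm_num)
  have hz : Filter.Tendsto (fun k : ℕ => α * k + β) Filter.atTop Filter.atTop :=
    Filter.tendsto_atTop_add_const_right _ β
      (tendsto_natCast_atTop_atTop.const_mul_atTop hα0)
  have hz1 : Filter.Tendsto (fun k : ℕ => α * k + β - 1) Filter.atTop Filter.atTop :=
    Filter.tendsto_atTop_add_const_right _ (-1) hz
  have hrp : Filter.Tendsto (fun k : ℕ => (α * k + β - 1) ^ α) Filter.atTop Filter.atTop :=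
    (tendsto_rpow_atTop hα0).comp hz1
  have h2 := hz.eventually_ge_atTop 2
  have h3 := hrp.eventually_ge_atTop (2 * |x|)
  filter_upwards [h2, h3] with k hk2 hk3
  set z := α * k + β with hzdef
  have hz0 : (0:ℝ) < z := by linarith
  have hGz : 0 < Real.Gamma z := Real.Gamma_pos_of_pos hz0
  have hGza : 0 < Real.Gamma (z + α) := Real.Gamma_pos_of_pos (by linarith)
  have hzk1 : α * (k + 1 : ℕ) + β = z + α := by push_cast; ring
  rw [hzk1]
  rw [Real.norm_eq_abs, Real.norm_eq_abs, abs_div, abs_div, abs_pow, abs_pow,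
    abs_of_pos hGz, abs_of_pos hGza]
  have hγ : 2 * |x| * Real.Gamma z ≤ Real.Gamma (z + α) := by
    calc 2 * |x| * Real.Gamma z ≤ (z - 1) ^ α * Real.Gamma z := by
          apply mul_le_mul_of_nonneg_right hk3 hGz.le
      _ ≤ Real.Gamma (z + α) := gamma_ratio_aux hα0 hk2
  rcases eq_or_ne x 0 with hx0 | hx0
  · simp [hx0, hGz.le, hGza.le]
    positivity
  · have hxpos : 0 < |x| := abs_pos.2 hx0
    have hpos : 0 < 2 * |x| * Real.Gamma z := by positivity
    calc |x| ^ (k + 1) / Real.Gamma (z + α)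
        ≤ |x| ^ (k + 1) / (2 * |x| * Real.Gamma z) := by
          apply div_le_div_of_nonneg_left (by positivity) hpos hγ
      _ = 1 / 2 * (|x| ^ k / Real.Gamma z) := by
          rw [pow_succ]
          field_simp

/-- Splitting the Mittag-Leffler series: `E_{α,1}(x) = ∑_{k<ℓ} x^k/Γ(αk+1) + x^ℓ E_{α,1+ℓα}(x)`. -/
lemma mittagLeffler_split (α x : ℝ) (hα0 : 0 < α) (ℓ : ℕ) :
    mittagLeffler α 1 x =
      (∑ k ∈ Finset.range ℓ, x ^ k / Real.Gamma (α * k + 1))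
        + x ^ ℓ * mittagLeffler α (1 + ℓ * α) x := by
  have hs : Summable (fun k : ℕ => x ^ k / Real.Gamma (α * k + 1)) :=
    summable_mittagLeffler α 1 x hα0 le_rfl
  have := (Summable.sum_add_tsum_nat_add ℓ hs).symm
  rw [mittagLeffler, this]
  congr 1
  have hcongr : ∀ i : ℕ, x ^ (i + ℓ) / Real.Gamma (α * (i + ℓ : ℕ) + 1)
      = x ^ ℓ * (x ^ i / Real.Gamma (α * i + (1 + ℓ * α))) := by
    intro i
    have h1 : α * ((i : ℝ) + ℓ) + 1 = α * i + (1 + ℓ * α) := by ring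
    rw [pow_add]
    push_cast
    rw [h1]
    ring
  rw [tsum_congr hcongr, tsum_mul_left, mittagLeffler]

/-- Let `0 < α < 1`, `ℓ ∈ ℕ`, `(λ_n)` positive, `(ψ_n)` real with `∑ λ_n^k |ψ_n| < ∞`
for `k = 0,…,ℓ`, and suppose the moments `∑ λ_n^k ψ_n = 0` vanish for `k = 0,…,ℓ-1`.
Then for every `t ≥ 0`,
`∑_n E_{α,1}(-λ_n t^α) ψ_n = ∑_n (-λ_n t^α)^ℓ E_{α,1+ℓα}(-λ_n t^α) ψ_n`. -/
theorem mittagLeffler_sum_eq_tail_sum_of_moments_vanish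
    (α : ℝ) (hα0 : 0 < α) (hα1 : α < 1) (ℓ : ℕ)
    (lam ψ : ℕ → ℝ) (hlam : ∀ n, 0 < lam n)
    (hsum : ∀ k ≤ ℓ, Summable (fun n => lam n ^ k * |ψ n|))
    (hmom : ∀ k < ℓ, ∑' n, lam n ^ k * ψ n = 0) :
    ∀ t : ℝ, 0 ≤ t →
      ∑' n, mittagLeffler α 1 (-lam n * t ^ α) * ψ n
        = ∑' n, (-lam n * t ^ α) ^ ℓ * mittagLeffler α (1 + ℓ * α) (-lam n * t ^ α) * ψ n := by
  intro t ht
  set A : ℕ → ℝ := fun n => mittagLeffler α 1 (-lam n * t ^ α) * ψ n with hA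
  set B : ℕ → ℝ := fun n =>
    (-lam n * t ^ α) ^ ℓ * mittagLeffler α (1 + ℓ * α) (-lam n * t ^ α) * ψ n with hB
  set g : ℕ → ℕ → ℝ := fun k n =>
    ((-1 : ℝ) ^ k * (t ^ α) ^ k / Real.Gamma (α * k + 1)) * (lam n ^ k * ψ n) with hg
  set F : ℕ → ℝ := fun n => ∑ k ∈ Finset.range ℓ, g k n with hF
  -- summability of moments (without absolute values)
  have hmomsum : ∀ k ≤ ℓ, Summable (fun n => lam n ^ k * ψ n) := by
    intro k hk
    rw [← summable_abs_iff]
    have : (fun n => |lam n ^ k * ψ n|) = fun n => lam n ^ k * |ψ n| := by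
      funext n
      rw [abs_mul, abs_of_pos (pow_pos (hlam n) k)]
    rw [this]
    exact hsum k hk
  have hgsum : ∀ k < ℓ, Summable (g k) := fun k hk =>
    (hmomsum k hk.le).mul_left _
  have hFsum : Summable F := by
    apply summable_sum
    intro k hk
    exact hgsum k (Finset.mem_range.mp hk)
  have hFtsum : ∑' n, F n = 0 := by
    rw [hF, Summable.tsum_finsetSum (fun k hk => hgsum k (Finset.mem_range.mp hk))]
    apply Finset.sum_eq_zero
    intro k hk
    rw [hg]
    simp only
    rw [tsum_mul_left, hmom k (Finset.mem_range.mp hk), mul_zero]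
  -- pointwise identity
  have hpt : ∀ n, B n = A n - F n := by
    intro n
    rw [hA, hB, hF]
    simp only
    rw [mittagLeffler_split α (-lam n * t ^ α) hα0 ℓ, add_mul, Finset.sum_mul]
    have : ∀ k ∈ Finset.range ℓ,
        (-lam n * t ^ α) ^ k / Real.Gamma (α * k + 1) * ψ n = g k n := by
      intro k _
      rw [hg]
      simp only
      rw [mul_pow, neg_pow]
      ring
    rw [Finset.sum_congr rfl this]
    ring
  by_cases hAsum : Summable A
  · have hBsum : Summable B := by
      have : Summable (fun n => A n - F n) := hAsum.sub hFsum
      exact this.congr (fun n => (hpt n).symm)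
    calc ∑' n, A n = ∑' n, (A n - F n) + ∑' n, F n := by
          rw [Summable.tsum_sub hAsum hFsum, hFtsum]; ring
      _ = ∑' n, B n := by
          rw [hFtsum, add_zero]
          exact tsum_congr (fun n => (hpt n).symm)
  · have hBsum : ¬ Summable B := by
      intro hBsum
      apply hAsum
      have : Summable (fun n => B n + F n) := hBsum.add hFsum
      apply this.congr
      intro n
      rw [hpt n]
      ring
    rw [tsum_eq_zero_of_not_summable hAsum, tsum_eq_zero_of_not_summable hBsum]
end

section
/- Let (λ_n)_{n≥1} be positive reals such that there exists δ > 0 with λ_n ≥ λ_1 + δ for every n ≥ 2, and let (ψ_n)_{n≥1} be reals with ∑_{n=1}^∞ |ψ_n| < ∞. If ∑_{n=1}^∞ ψ_n/(ζ + λ_n) = 0 for every real ζ > 0, then ψ_1 = 0. (The hypothesis extends by analytic continuation to all ζ ∈ ℂ away from {−λ_n}, and integrating over a small circle around −λ_1 isolates ψ_1.) -/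
open Filter Finset Topology

private lemma prod_ratio_tendsto_zero (a b δ : ℝ) (ha : 0 < a) (hδ : 0 < δ)
    (hab : a + δ ≤ b) :
    Tendsto (fun k => ∏ i ∈ Finset.range k, ((i : ℝ) + 1 + a) / ((i : ℝ) + 1 + b))
      atTop (𝓝 0) := by
  have hb : 0 < b := lt_of_lt_of_le (by linarith) hab
  have hfac_pos : ∀ i : ℕ, 0 < ((i : ℝ) + 1 + a) / ((i : ℝ) + 1 + b) := by
    intro i
    have h1 : (0:ℝ) < (i : ℝ) + 1 + a := by positivity
    have h2 : (0:ℝ) < (i : ℝ) + 1 + b := by positivity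
    exact div_pos h1 h2
  have hfac_le : ∀ i : ℕ, ((i : ℝ) + 1 + a) / ((i : ℝ) + 1 + b)
      ≤ Real.exp (-(δ / ((i : ℝ) + 1 + b))) := by
    intro i
    have h2 : (0:ℝ) < (i : ℝ) + 1 + b := by positivity
    have key : ((i : ℝ) + 1 + a) / ((i : ℝ) + 1 + b)
        ≤ -(δ / ((i : ℝ) + 1 + b)) + 1 := by
      rw [div_le_iff₀ h2]
      have h3 : δ / ((i : ℝ) + 1 + b) * ((i : ℝ) + 1 + b) = δ := by
        field_simp
      nlinarith [h3]
    exact key.trans (Real.add_one_le_exp _)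
  have hsum_div : Tendsto (fun k => ∑ i ∈ Finset.range k, δ / ((i : ℝ) + 1 + b))
      atTop atTop := by
    have hcomp : ∀ k, (δ / (1 + b)) * ∑ i ∈ Finset.range k, 1 / ((i : ℝ) + 1)
        ≤ ∑ i ∈ Finset.range k, δ / ((i : ℝ) + 1 + b) := by
      intro k
      rw [Finset.mul_sum]
      apply Finset.sum_le_sum
      intro i _
      have h1 : (0:ℝ) < (i : ℝ) + 1 := by positivity
      have h2 : (0:ℝ) < (i : ℝ) + 1 + b := by positivity
      have h3 : (0:ℝ) < 1 + b := by linarith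
      rw [div_mul_div_comm, mul_one, div_le_div_iff₀ (by positivity) h2]
      nlinarith [mul_nonneg (mul_nonneg hδ.le hb.le) (Nat.cast_nonneg (α := ℝ) i)]
    have hH := Real.tendsto_sum_range_one_div_nat_succ_atTop
    have hc : (0:ℝ) < δ / (1 + b) := by positivity
    have hH' : Tendsto (fun k => (δ / (1 + b)) * ∑ i ∈ Finset.range k, 1 / ((i : ℝ) + 1))
        atTop atTop := by
      exact Tendsto.const_mul_atTop hc hH
    exact tendsto_atTop_mono hcomp hH'
  have hexp : Tendsto (fun k => Real.exp (-(∑ i ∈ Finset.range k, δ / ((i : ℝ) + 1 + b))))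
      atTop (𝓝 0) := Real.tendsto_exp_atBot.comp (tendsto_neg_atTop_atBot.comp hsum_div)
  apply squeeze_zero
  · intro k
    exact Finset.prod_nonneg fun i _ => (hfac_pos i).le
  · intro k
    calc ∏ i ∈ Finset.range k, ((i : ℝ) + 1 + a) / ((i : ℝ) + 1 + b)
        ≤ ∏ i ∈ Finset.range k, Real.exp (-(δ / ((i : ℝ) + 1 + b))) :=
          Finset.prod_le_prod (fun i _ => (hfac_pos i).le) (fun i _ => hfac_le i)
      _ = Real.exp (-(∑ i ∈ Finset.range k, δ / ((i : ℝ) + 1 + b))) := by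
          rw [← Real.exp_sum]
          congr 1
          simp
  · exact hexp

/-- Let `(λ_n)_{n≥0}` be positive reals whose first entry `λ_0` is separated from the rest
by a gap `δ > 0` (i.e. `λ_n ≥ λ_0 + δ` for all `n ≥ 1`), and let `(ψ_n)` be absolutely
summable. If `∑_n ψ_n/(ζ + λ_n) = 0` for every real `ζ > 0`, then `ψ_0 = 0`.
(Here the sequences are indexed by `ℕ`, so the "first" term has index `0`.) -/
theorem first_coefficient_vanishes_of_resolvent_sum_vanishes
    (lam ψ : ℕ → ℝ) (hlam : ∀ n, 0 < lam n)
    (hgap : ∃ δ > (0 : ℝ), ∀ n, 1 ≤ n → lam 0 + δ ≤ lam n)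
    (hsum : Summable (fun n => |ψ n|))
    (hvanish : ∀ ζ : ℝ, 0 < ζ → ∑' n, ψ n / (ζ + lam n) = 0) :
    ψ 0 = 0 := by
  obtain ⟨δ, hδ, hgap⟩ := hgap
  set W : ℕ → ℕ → ℝ := fun k n => ∏ i ∈ Finset.range k, ((i : ℝ) + 1 + lam n)⁻¹ with hW
  have hWpos : ∀ k n, 0 < W k n := by
    intro k n
    apply Finset.prod_pos
    intro i _
    have := hlam n
    positivity
  have hWle : ∀ k n, W k n ≤ 1 := by
    intro k n
    apply Finset.prod_le_one (fun i _ => by have := hlam n; positivity)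
    intro i _
    rw [inv_le_one_iff₀]
    right
    have := hlam n
    linarith [Nat.cast_nonneg (α := ℝ) i]
  -- summability
  have hsummable : ∀ (k : ℕ) (ζ : ℝ), 0 < ζ →
      Summable (fun n => ψ n * W k n / (ζ + lam n)) := by
    intro k ζ hζ
    apply Summable.of_norm
    have hbs : Summable (fun n => |ψ n| / ζ) := hsum.div_const ζ
    apply hbs.of_nonneg_of_le (fun n => norm_nonneg _)
    intro n
    have h1 : 0 < ζ + lam n := by linarith [hlam n]
    rw [Real.norm_eq_abs, abs_div, abs_mul, abs_of_pos (hWpos k n), abs_of_pos h1]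
    apply div_le_div₀ (by positivity) _ hζ (by linarith [hlam n])
    calc |ψ n| * W k n ≤ |ψ n| * 1 :=
          mul_le_mul_of_nonneg_left (hWle k n) (abs_nonneg _)
      _ = |ψ n| := mul_one _
  -- key vanishing claim
  have hkey : ∀ (k : ℕ) (ζ : ℝ), 0 < ζ → (ζ < 1 ∨ (k : ℝ) < ζ) →
      ∑' n, ψ n * W k n / (ζ + lam n) = 0 := by
    intro k
    induction k with
    | zero =>
      intro ζ hζ _
      have := hvanish ζ hζ
      simpa [hW] using this
    | succ k ih =>
      intro ζ hζ hcond
      set c : ℝ := (k : ℝ) + 1 with hc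
      have hcpos : 0 < c := by positivity
      have hζc : ζ ≠ c := by
        rcases hcond with h | h
        · intro h'; rw [h'] at h; simp [hc] at h; linarith [Nat.cast_nonneg (α := ℝ) k]
        · intro h'; rw [h'] at h; push_cast at h; linarith
      have hioh : ∑' n, ψ n * W k n / (ζ + lam n) = 0 := by
        apply ih ζ hζ
        rcases hcond with h | h
        · exact Or.inl h
        · right; push_cast at h ⊢; linarith
      have hioc : ∑' n, ψ n * W k n / (c + lam n) = 0 := by
        apply ih c hcpos
        right; simp [hc]
      have hf := hsummable k ζ hζ
      have hg := hsummable k c hcpos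
      have hterm : ∀ n, ψ n * W (k+1) n / (ζ + lam n)
          = (c - ζ)⁻¹ * (ψ n * W k n / (ζ + lam n) - ψ n * W k n / (c + lam n)) := by
        intro n
        have h1 : ζ + lam n ≠ 0 := ne_of_gt (by have := hlam n; linarith)
        have h2 : c + lam n ≠ 0 := ne_of_gt (by have := hlam n; linarith)
        have h3 : c - ζ ≠ 0 := sub_ne_zero.mpr (Ne.symm hζc)
        have hWs : W (k+1) n = W k n * (c + lam n)⁻¹ := by
          simp only [hW, Finset.prod_range_succ, hc]
        rw [hWs]
        field_simp
        ring
      calc ∑' n, ψ n * W (k+1) n / (ζ + lam n)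
          = ∑' n, (c - ζ)⁻¹ * (ψ n * W k n / (ζ + lam n) - ψ n * W k n / (c + lam n)) := by
            exact tsum_congr hterm
        _ = (c - ζ)⁻¹ * ∑' n, (ψ n * W k n / (ζ + lam n) - ψ n * W k n / (c + lam n)) :=
            tsum_mul_left
        _ = (c - ζ)⁻¹ * ((∑' n, ψ n * W k n / (ζ + lam n)) - ∑' n, ψ n * W k n / (c + lam n)) := by
            rw [Summable.tsum_sub hf hg]
        _ = 0 := by rw [hioh, hioc]; ring
  -- the normalized sums
  set F : ℕ → ℕ → ℝ := fun k n =>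
    ψ n * (W k n / W k 0) * ((1/2 + lam 0) / (1/2 + lam n)) with hF
  have hFzero : ∀ k, ∑' n, F k n = 0 := by
    intro k
    have h0 := hkey k (1/2) (by norm_num) (Or.inl (by norm_num))
    have : ∑' n, F k n
        = ((1/2 + lam 0) / W k 0) * ∑' n, ψ n * W k n / (1/2 + lam n) := by
      rw [← tsum_mul_left]
      apply tsum_congr
      intro n
      simp only [hF]
      ring
    rw [this, h0, mul_zero]
  -- pointwise limits
  have hFlim : ∀ n, Tendsto (fun k => F k n) atTop (𝓝 (if n = 0 then ψ 0 else 0)) := by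
    intro n
    rcases Nat.eq_zero_or_pos n with rfl | hn
    · simp only [hF, if_pos rfl]
      have : ∀ k, ψ 0 * (W k 0 / W k 0) * ((1/2 + lam 0) / (1/2 + lam 0)) = ψ 0 := by
        intro k
        rw [div_self (hWpos k 0).ne', div_self (by have := hlam 0; positivity)]
        ring
      exact Tendsto.congr (fun k => (this k).symm) tendsto_const_nhds
    · simp only [if_neg hn.ne']
      have hratio : Tendsto (fun k => W k n / W k 0) atTop (𝓝 0) := by
        have heq : ∀ k, W k n / W k 0
            = ∏ i ∈ Finset.range k, ((i : ℝ) + 1 + lam 0) / ((i : ℝ) + 1 + lam n) := by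
          intro k
          rw [hW]
          rw [← Finset.prod_div_distrib]
          apply Finset.prod_congr rfl
          intro i _
          have h1 : ((i : ℝ) + 1 + lam n) ≠ 0 := by have := hlam n; positivity
          have h2 : ((i : ℝ) + 1 + lam 0) ≠ 0 := by have := hlam 0; positivity
          field_simp
        have := prod_ratio_tendsto_zero (lam 0) (lam n) δ (hlam 0) hδ (hgap n hn)
        rw [funext heq]
        exact this
      have : Tendsto (fun k => ψ n * (W k n / W k 0) * ((1/2 + lam 0) / (1/2 + lam n)))
          atTop (𝓝 (ψ n * 0 * ((1/2 + lam 0) / (1/2 + lam n)))) :=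
        ((hratio.const_mul (ψ n)).mul_const _)
      simp only [hF]
      simpa using this
  -- dominated convergence
  have hbound : ∀ k n, ‖F k n‖ ≤ |ψ n| := by
    intro k n
    rcases Nat.eq_zero_or_pos n with rfl | hn
    · simp only [hF]
      rw [div_self (hWpos k 0).ne', div_self (by have := hlam 0; positivity)]
      simp
    · have h1 : 0 < (1:ℝ)/2 + lam n := by have := hlam n; linarith
      have h2 : 0 < (1:ℝ)/2 + lam 0 := by have := hlam 0; linarith
      have hr1 : W k n / W k 0 ≤ 1 := by
        rw [div_le_one (hWpos k 0)]
        apply Finset.prod_le_prod (fun i _ => by have := hlam n; positivity)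
        intro i _
        apply inv_anti₀ (by have := hlam 0; positivity)
        have := hgap n hn
        linarith
      have hr2 : ((1:ℝ)/2 + lam 0) / (1/2 + lam n) ≤ 1 := by
        rw [div_le_one h1]
        have := hgap n hn
        linarith
      rw [Real.norm_eq_abs, hF]
      simp only
      rw [abs_mul, abs_mul]
      have hw0 : (0:ℝ) ≤ W k n / W k 0 := le_of_lt (div_pos (hWpos k n) (hWpos k 0))
      rw [abs_of_nonneg hw0, abs_of_nonneg (le_of_lt (div_pos h2 h1))]
      calc |ψ n| * (W k n / W k 0) * ((1/2 + lam 0) / (1/2 + lam n))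
          ≤ |ψ n| * 1 * 1 := by
            apply mul_le_mul _ hr2 (le_of_lt (div_pos h2 h1)) (by positivity)
            exact mul_le_mul_of_nonneg_left hr1 (abs_nonneg _)
        _ = |ψ n| := by ring
  have hmain : Tendsto (fun k => ∑' n, F k n) atTop
      (𝓝 (∑' n, if n = 0 then ψ 0 else 0)) :=
    tendsto_tsum_of_dominated_convergence hsum hFlim (Eventually.of_forall hbound)
  have hsum0 : ∑' n, (if n = 0 then ψ 0 else (0:ℝ)) = ψ 0 := by
    rw [tsum_eq_single 0 (fun n hn => if_neg hn)]
    simp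
  rw [hsum0] at hmain
  have : Tendsto (fun _ : ℕ => (0:ℝ)) atTop (𝓝 (ψ 0)) := by
    simpa [hFzero] using hmain
  exact tendsto_nhds_unique this tendsto_const_nhds
end
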